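/- arXiv:2409.20155 — 2 statements merged into one kernel-verified Lean document; each statement's English description precedes it below -/
import Mathlib

section
/- Fix β > 0 and m > 0. Then for any v ∈ L²(∂Ω) with v not H^{N−1}-a.e. zero, there is a unique constant c_v > 0 satisfying c_v = (1/(|{|v| ≥ c_v}| + βm)) ∫_{{|v| ≥ c_v}} |v| dH^{N−1}; equivalently, c_v is the unique positive root of φ(c) = c (|{σ ∈ ∂Ω : |v(σ)| ≥ c}| + βm) − ∫_{{|v| ≥ c}} |v| dH^{N−1}. -/
open MeasureTheory Set Filter
open scoped RealInnerProductSpace ENNReal Topology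
noncomputable section

abbrev Euc (N : ℕ) := EuclideanSpace ℝ (Fin N)

/-- The (N-1)-dimensional Hausdorff (surface) measure on the boundary of `Ω`. -/
def sm (N : ℕ) (Ω : Set (Euc N)) : Measure (Euc N) :=
  (μH[(N : ℝ) - 1]).restrict (frontier Ω)

/-- Membership in `H¹(Ω)` (concrete model: function and gradient square integrable). -/
def MemH1 {N : ℕ} (Ω : Set (Euc N)) (v : Euc N → ℝ) : Prop :=
  MemLp v 2 (volume.restrict Ω) ∧ MemLp (fun x => gradient v x) 2 (volume.restrict Ω)

/-- Dirichlet energy `∫_Ω |∇v|²`. -/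
def dirE {N : ℕ} (Ω : Set (Euc N)) (v : Euc N → ℝ) : ℝ := ∫ x in Ω, ‖gradient v x‖ ^ 2

/-- Boundary energy `∫_{∂Ω} v²/(1+βh)`. -/
def bdryE {N : ℕ} (Ω : Set (Euc N)) (β : ℝ) (v h : Euc N → ℝ) : ℝ :=
  ∫ σ, v σ ^ 2 / (1 + β * h σ) ∂(sm N Ω)

/-- The insulation functional `J(v,h)`. -/
def Jfun {N : ℕ} (Ω : Set (Euc N)) (β : ℝ) (v h : Euc N → ℝ) : ℝ :=
  dirE Ω v + β * bdryE Ω β v h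

/-- The Rayleigh quotient `F(v,h)`. -/
def Rq {N : ℕ} (Ω : Set (Euc N)) (β : ℝ) (v h : Euc N → ℝ) : ℝ :=
  Jfun Ω β v h / ∫ x in Ω, v x ^ 2

/-- `h ∈ H_m(∂Ω)`: nonnegative, integrable on `∂Ω`, with total mass `m`. -/
def memHm {N : ℕ} (Ω : Set (Euc N)) (m : ℝ) (h : Euc N → ℝ) : Prop :=
  (∀ σ, 0 ≤ h σ) ∧ Integrable h (sm N Ω) ∧ (∫ σ, h σ ∂(sm N Ω)) = m

/-- The optimal insulation eigenvalue `λ_m`. -/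
def lam {N : ℕ} (Ω : Set (Euc N)) (β m : ℝ) : ℝ :=
  sInf {t | ∃ v h, MemH1 Ω v ∧ ¬ v =ᵐ[volume.restrict Ω] 0 ∧ memHm Ω m h ∧ t = Rq Ω β v h}

/-- The first Robin eigenvalue `λ^R(β)`. -/
def lamR {N : ℕ} (Ω : Set (Euc N)) (β : ℝ) : ℝ :=
  sInf {t | ∃ v, MemH1 Ω v ∧ ¬ v =ᵐ[volume.restrict Ω] 0 ∧
    t = (dirE Ω v + β * ∫ σ, v σ ^ 2 ∂(sm N Ω)) / ∫ x in Ω, v x ^ 2}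

/-- The first nontrivial Neumann eigenvalue `λ^N`. -/
def lamN {N : ℕ} (Ω : Set (Euc N)) : ℝ :=
  sInf {t | ∃ v, MemH1 Ω v ∧ ¬ v =ᵐ[volume.restrict Ω] 0 ∧ (∫ x in Ω, v x) = 0 ∧
    t = dirE Ω v / ∫ x in Ω, v x ^ 2}

/-- The first Dirichlet eigenvalue `λ^D`. -/
def lamD {N : ℕ} (Ω : Set (Euc N)) : ℝ :=
  sInf {t | ∃ v, MemH1 Ω v ∧ ¬ v =ᵐ[volume.restrict Ω] 0 ∧ (∀ σ ∈ frontier Ω, v σ = 0) ∧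
    t = dirE Ω v / ∫ x in Ω, v x ^ 2}

/-- Radial function about the center `x0`. -/
def IsRadial {N : ℕ} (x0 : Euc N) (u : Euc N → ℝ) : Prop :=
  ∀ x y, ‖x - x0‖ = ‖y - x0‖ → u x = u y

theorem aux_critical {α : Type*} [MeasurableSpace α] (μ : Measure α)
    (w : α → ℝ) (hw : StronglyMeasurable w) (hw0 : ∀ σ, 0 ≤ w σ)
    (hL2 : MemLp w 2 μ) (hne : ¬ w =ᵐ[μ] 0) (k : ℝ) (hk : 0 < k) :
    ∃! c : ℝ, 0 < c ∧
      c * ((μ {σ | c ≤ w σ}).toReal + k) = ∫ σ in {σ | c ≤ w σ}, w σ ∂μ := by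
  set S : ℝ → Set α := fun c => {σ | c ≤ w σ} with hS
  have hSmeas : ∀ c, MeasurableSet (S c) := fun c => hw.measurable measurableSet_Ici
  have hSfin : ∀ c, 0 < c → μ (S c) < ⊤ := by
    intro c hc
    have h := hL2.meas_ge_lt_top (p := 2) (by norm_num) (by norm_num)
      (ε := Real.toNNReal c) (by simp [Real.toNNReal_eq_zero]; linarith)
    have hset : {x | Real.toNNReal c ≤ ‖w x‖₊} = S c := by
      ext x
      show Real.toNNReal c ≤ ‖w x‖₊ ↔ c ≤ w x
      rw [← NNReal.coe_le_coe, coe_nnnorm, Real.coe_toNNReal c hc.le, Real.norm_eq_abs,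
        abs_of_nonneg (hw0 x)]
    rwa [hset] at h
  have hIntOn : ∀ c, 0 < c → IntegrableOn w (S c) μ := by
    intro c hc
    have : IsFiniteMeasure (μ.restrict (S c)) :=
      ⟨by rw [Measure.restrict_apply_univ]; exact hSfin c hc⟩
    exact (hL2.restrict (S c)).integrable (by norm_num)
  have hpeq : ∀ c : ℝ, (fun σ => max (w σ - c) 0) = (S c).indicator (fun σ => w σ - c) := by
    intro c
    funext σ
    by_cases h : c ≤ w σ
    · rw [Set.indicator_of_mem (show σ ∈ S c from h), max_eq_left (by linarith)]
    · rw [Set.indicator_of_notMem (show σ ∉ S c from h),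
        max_eq_right (by push_neg at h; linarith)]
  have hpInt : ∀ c, 0 < c → Integrable (fun σ => max (w σ - c) 0) μ := by
    intro c hc
    rw [hpeq c, integrable_indicator_iff (hSmeas c)]
    exact (hIntOn c hc).sub (integrableOn_const (hSfin c hc).ne)
  set G : ℝ → ℝ := fun c => ∫ σ, max (w σ - c) 0 ∂μ with hG
  have hGeq : ∀ c, 0 < c → G c = (∫ σ in S c, w σ ∂μ) - c * (μ (S c)).toReal := by
    intro c hc
    rw [hG]
    simp only
    rw [hpeq c, integral_indicator (hSmeas c),
      integral_sub (hIntOn c hc) (integrableOn_const (hSfin c hc).ne),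
      setIntegral_const, measureReal_def, smul_eq_mul, mul_comm]
  have hGanti : ∀ c c', 0 < c → c ≤ c' → G c' ≤ G c := by
    intro c c' hc hcc
    exact integral_mono (hpInt c' (hc.trans_le hcc)) (hpInt c hc)
      (fun σ => max_le_max (by linarith) le_rfl)
  have hGnonneg : ∀ c, 0 ≤ G c := fun c => integral_nonneg fun σ => le_max_right _ _
  have hGlip : ∀ ε, 0 < ε → ∀ c c', ε ≤ c → ε ≤ c' →
      |G c - G c'| ≤ (μ (S ε)).toReal * |c - c'| := by
    intro ε hε c c' hc hc'
    have hcp : 0 < c := hε.trans_le hc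
    have hcp' : 0 < c' := hε.trans_le hc'
    have h1 : G c - G c' = ∫ σ, (max (w σ - c) 0 - max (w σ - c') 0) ∂μ :=
      (integral_sub (hpInt c hcp) (hpInt c' hcp')).symm
    rw [h1]
    have hIε : Integrable ((S ε).indicator fun _ => |c - c'|) μ := by
      rw [integrable_indicator_iff (hSmeas ε)]
      exact integrableOn_const (hSfin ε hε).ne
    calc |∫ σ, (max (w σ - c) 0 - max (w σ - c') 0) ∂μ|
        ≤ ∫ σ, |max (w σ - c) 0 - max (w σ - c') 0| ∂μ := by
          simpa [Real.norm_eq_abs] using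
            norm_integral_le_integral_norm (fun σ => max (w σ - c) 0 - max (w σ - c') 0) (μ := μ)
      _ ≤ ∫ σ, (S ε).indicator (fun _ => |c - c'|) σ ∂μ := by
          refine integral_mono ((hpInt c hcp).sub (hpInt c' hcp')).abs hIε fun σ => ?_
          by_cases hσ : σ ∈ S ε
          · rw [Set.indicator_of_mem hσ]
            have h2 := abs_max_sub_max_le_abs (w σ - c) (w σ - c') 0
            calc |max (w σ - c) 0 - max (w σ - c') 0| ≤ |(w σ - c) - (w σ - c')| := h2
              _ = |c - c'| := by rw [show (w σ - c) - (w σ - c') = -(c - c') by ring, abs_neg]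
          · rw [Set.indicator_of_notMem hσ]
            have hwσ : w σ < ε := by simpa [hS, not_le] using hσ
            rw [max_eq_right (by linarith), max_eq_right (by linarith)]
            simp
      _ = (μ (S ε)).toReal * |c - c'| := by
          rw [integral_indicator (hSmeas ε), setIntegral_const, measureReal_def, smul_eq_mul]
  have hGcont : ContinuousOn G (Set.Ioi 0) := by
    intro c0 hc0
    have hc0' : (0 : ℝ) < c0 := hc0
    have hlip : LipschitzOnWith ((μ (S (c0 / 2))).toReal.toNNReal) G (Set.Ici (c0 / 2)) := by
      refine LipschitzOnWith.of_dist_le_mul fun x hx y hy => ?_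
      rw [Real.dist_eq, Real.dist_eq]
      calc |G x - G y| ≤ (μ (S (c0 / 2))).toReal * |x - y| :=
            hGlip (c0 / 2) (by linarith) x y hx hy
        _ = _ := by rw [Real.coe_toNNReal _ ENNReal.toReal_nonneg]
    exact (hlip.continuousOn.continuousAt (Ici_mem_nhds (by linarith))).continuousWithinAt
  set F : ℝ → ℝ := fun c => G c - c * k with hF
  have hFcont : ContinuousOn F (Set.Ioi 0) :=
    hGcont.sub ((continuous_id.mul continuous_const).continuousOn)
  have hFanti : ∀ c c', 0 < c → c < c' → F c' < F c := by
    intro c c' hc hcc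
    have h1 := hGanti c c' hc hcc.le
    simp only [hF]
    nlinarith
  have hiff : ∀ c, 0 < c →
      ((c * ((μ (S c)).toReal + k) = ∫ σ in S c, w σ ∂μ) ↔ F c = 0) := by
    intro c hc
    have h1 := hGeq c hc
    simp only [hF]
    constructor <;> intro h <;> linarith
  -- find c0 with positive measure
  have hpos : ∃ c0 : ℝ, 0 < c0 ∧ 0 < μ (S c0) := by
    by_contra h
    push_neg at h
    apply hne
    have hnull : μ {σ | w σ ≠ 0} = 0 := by
      have hsub : {σ | w σ ≠ 0} ⊆ ⋃ n : ℕ, S (1 / (n + 1)) := by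
        intro σ hσ
        have hwσ : 0 < w σ := lt_of_le_of_ne (hw0 σ) (Ne.symm hσ)
        obtain ⟨n, hn⟩ := exists_nat_one_div_lt hwσ
        exact Set.mem_iUnion.mpr ⟨n, hn.le⟩
      refine measure_mono_null hsub (measure_iUnion_null fun n => ?_)
      exact nonpos_iff_eq_zero.mp (h (1 / (n + 1)) (by positivity))
    rw [Filter.EventuallyEq]
    exact (ae_iff).mpr (by simpa using hnull)
  obtain ⟨c0, hc0, hμc0⟩ := hpos
  set δ : ℝ := (c0 / 2) * (μ (S c0)).toReal with hδdef
  have hδ : 0 < δ := by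
    apply mul_pos (by linarith)
    exact ENNReal.toReal_pos hμc0.ne' (hSfin c0 hc0).ne
  have hGlb : δ ≤ G (c0 / 2) := by
    have hIc0 : Integrable ((S c0).indicator fun _ => c0 / 2) μ := by
      rw [integrable_indicator_iff (hSmeas c0)]
      exact integrableOn_const (hSfin c0 hc0).ne
    have h1 : (∫ σ, (S c0).indicator (fun _ => c0 / 2) σ ∂μ) ≤ G (c0 / 2) := by
      refine integral_mono hIc0 (hpInt (c0 / 2) (by linarith)) fun σ => ?_
      by_cases hσ : σ ∈ S c0
      · rw [Set.indicator_of_mem hσ]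
        have : c0 ≤ w σ := hσ
        exact le_max_of_le_left (by linarith)
      · rw [Set.indicator_of_notMem hσ]
        exact le_max_right _ _
    rwa [integral_indicator (hSmeas c0), setIntegral_const, measureReal_def, smul_eq_mul, mul_comm] at h1
  set ε : ℝ := min (c0 / 2) (δ / (2 * k)) with hεdef
  have hε : 0 < ε := lt_min (by linarith) (by positivity)
  have hFε : 0 < F ε := by
    have h1 : G (c0 / 2) ≤ G ε := hGanti ε (c0 / 2) hε (min_le_left _ _)
    have h2 : ε * k ≤ δ / 2 := by
      have : ε ≤ δ / (2 * k) := min_le_right _ _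
      calc ε * k ≤ (δ / (2 * k)) * k := by nlinarith
        _ = δ / 2 := by field_simp
    simp only [hF]
    linarith
  set C : ℝ := max ε (G ε / k) + 1 with hCdef
  have hεC : ε < C := by
    rw [hCdef]
    exact lt_add_of_le_of_pos (le_max_left _ _) one_pos
  have hFC : F C < 0 := by
    have h1 : G C ≤ G ε := hGanti ε C hε hεC.le
    have h2 : G ε / k ≤ C - 1 := by
      rw [hCdef]
      have := le_max_right ε (G ε / k); linarith
    have h3 : G ε ≤ (C - 1) * k := by
      have := (div_le_iff₀ hk).mp h2; linarith
    simp only [hF]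
    nlinarith
  have hIVT := intermediate_value_Icc' hεC.le (hFcont.mono fun x hx => by
    have : ε ≤ x := hx.1
    exact lt_of_lt_of_le hε this)
  have h0mem : (0 : ℝ) ∈ Set.Icc (F C) (F ε) := ⟨hFC.le, hFε.le⟩
  obtain ⟨c, hcmem, hFc⟩ := hIVT h0mem
  have hcpos : 0 < c := lt_of_lt_of_le hε hcmem.1
  refine ⟨c, ⟨hcpos, (hiff c hcpos).mpr hFc⟩, ?_⟩
  rintro y ⟨hy, hyeq⟩
  have hFy : F y = 0 := (hiff y hy).mp hyeq
  by_contra hne'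
  rcases lt_or_gt_of_ne hne' with h | h
  · have := hFanti y c hy h
    rw [hFy, hFc] at this
    exact lt_irrefl 0 this
  · have := hFanti c y hcpos h
    rw [hFy, hFc] at this
    exact lt_irrefl 0 this

/-- existence and uniqueness of the positive critical constant `c_v`. -/
theorem critical_constant_exists_unique {N : ℕ} (Ω : Set (Euc N)) (hΩo : IsOpen Ω)
    (hΩb : Bornology.IsBounded Ω) (β m : ℝ) (hβ : 0 < β) (hm : 0 < m)
    (v : Euc N → ℝ) (hv : MemLp v 2 (sm N Ω)) (hvne : ¬ v =ᵐ[sm N Ω] 0) :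
    ∃! c : ℝ, 0 < c ∧
      c * ((sm N Ω {σ | c ≤ |v σ|}).toReal + β * m)
        = ∫ σ in {σ | c ≤ |v σ|}, |v σ| ∂(sm N Ω) := by
  set μ := sm N Ω with hμ
  set w : Euc N → ℝ := fun σ => ‖hv.1.mk v σ‖ with hwdef
  have hwsm : StronglyMeasurable w := hv.1.stronglyMeasurable_mk.norm
  have hw0 : ∀ σ, 0 ≤ w σ := fun σ => norm_nonneg _
  have hae : v =ᵐ[μ] hv.1.mk v := hv.1.ae_eq_mk
  have haev : (fun σ => |v σ|) =ᵐ[μ] w :=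
    hae.mono fun σ h => by simp only [hwdef, h, Real.norm_eq_abs]
  have hL2w : MemLp w 2 μ := (MemLp.ae_eq hae hv).norm
  have hnew : ¬ w =ᵐ[μ] 0 := by
    intro h
    apply hvne
    have h2 : hv.1.mk v =ᵐ[μ] 0 := h.mono fun σ hσ => by
      simpa only [hwdef, Pi.zero_apply, norm_eq_zero] using hσ
    exact hae.trans h2
  have key := aux_critical μ w hwsm hw0 hL2w hnew (β * m) (mul_pos hβ hm)
  have hsets : ∀ c : ℝ, {σ | c ≤ |v σ|} =ᵐ[μ] {σ | c ≤ w σ} := by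
    intro c
    rw [Filter.eventuallyEq_set]
    exact haev.mono fun σ h => by simp only [Set.mem_setOf_eq]; rw [show |v σ| = w σ from h]
  refine (existsUnique_congr fun c => ?_).mpr key
  have h1 : μ {σ | c ≤ |v σ|} = μ {σ | c ≤ w σ} := measure_congr (hsets c)
  have h2 : ∫ σ in {σ | c ≤ |v σ|}, |v σ| ∂μ = ∫ σ in {σ | c ≤ w σ}, w σ ∂μ := by
    rw [setIntegral_congr_set (hsets c)]
    exact integral_congr_ae (ae_restrict_of_ae haev)
  rw [h1, h2]
end
end

section
/- Let β, m > 0, let v ∈ L²(∂Ω), and let c_v > 0 be the unique constant with c_v = (1/(|{|v| ≥ c_v}| + βm)) ∫_{{|v| ≥ c_v}} |v| dH^{N−1}. Define h_v(σ) = |v(σ)|/(c_v β) − 1/β if |v(σ)| ≥ c_v and h_v(σ) = 0 otherwise. Then h_v is a nonnegative function in L²(∂Ω), it satisfies ∫_{∂Ω} h_v dH^{N−1} = m, and h_v minimizes ĥ ↦ ∫_{∂Ω} v²/(1+βĥ) dH^{N−1} over all nonnegative ĥ ∈ L¹(∂Ω) with ∫_{∂Ω} ĥ dH^{N−1} = m.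 -/
open MeasureTheory Set Filter
open scoped RealInnerProductSpace ENNReal Topology
noncomputable section

/-!
For `s ≥ 0` the function `s ↦ t² / (1 + β s) + c² β s` is minimized at `s = h_v(t)`:
when `|t| ≥ c` this is AM-GM for `t² / d + c² d` with `d = 1 + β s`, and when `|t| < c`
the reduction `t² - t² / (1 + β s) ≤ t² β s` is at most `c² β s`. Integrating over `∂Ω`,
the terms `c² β ∫ ĥ = c² β m` agree for every admissible `ĥ`, so `h_v` minimizes the
boundary energy.
The defining equation of `c_v` says exactly that `h_v` has mass `m`.
-/

def insulationProfile (c β t : ℝ) : ℝ :=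
  if c ≤ |t| then |t| / (c * β) - 1 / β else 0

section Pointwise

variable {c β : ℝ}

theorem insulationProfile_of_le {t : ℝ} (h : c ≤ |t|) :
    insulationProfile c β t = |t| / (c * β) - 1 / β := if_pos h

theorem insulationProfile_of_lt {t : ℝ} (h : |t| < c) : insulationProfile c β t = 0 :=
  if_neg h.not_ge

theorem measurable_insulationProfile : Measurable (insulationProfile c β) :=
  Measurable.ite (measurableSet_le measurable_const measurable_abs)
    ((measurable_abs.div_const _).sub_const _) measurable_const

variable (hc : 0 < c) (hβ : 0 < β)
include hc hβ

theorem insulationProfile_eq_indicator (t : ℝ) :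
    insulationProfile c β t = {s : ℝ | c ≤ |s|}.indicator (fun s => (|s| - c) / (c * β)) t := by
  by_cases h : c ≤ |t|
  · rw [insulationProfile_of_le h, indicator_of_mem (show t ∈ {s : ℝ | c ≤ |s|} from h)]
    field_simp
  · rw [insulationProfile_of_lt (not_le.mp h),
      indicator_of_notMem (show t ∉ {s : ℝ | c ≤ |s|} from h)]

theorem insulationProfile_nonneg (t : ℝ) : 0 ≤ insulationProfile c β t := by
  rw [insulationProfile_eq_indicator hc hβ]
  refine indicator_nonneg (fun s hs => div_nonneg ?_ (mul_pos hc hβ).le) t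
  exact sub_nonneg.mpr hs

theorem insulationProfile_le_abs (t : ℝ) : insulationProfile c β t ≤ |t| / (c * β) := by
  by_cases h : c ≤ |t|
  · rw [insulationProfile_of_le h]
    linarith [one_div_pos.mpr hβ]
  · rw [insulationProfile_of_lt (not_le.mp h)]
    positivity

theorem insulationProfile_le_sq (t : ℝ) : insulationProfile c β t ≤ t ^ 2 / (c ^ 2 * β) := by
  by_cases h : c ≤ |t|
  · calc insulationProfile c β t ≤ |t| / (c * β) := insulationProfile_le_abs hc hβ t
      _ = c * |t| / (c ^ 2 * β) := by field_simp
      _ ≤ t ^ 2 / (c ^ 2 * β) := by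
          rw [← sq_abs t, sq |t|]
          gcongr
  · rw [insulationProfile_of_lt (not_le.mp h)]
    positivity

theorem sq_div_one_add_insulationProfile_add_le (t : ℝ) {s : ℝ} (hs : 0 ≤ s) :
    t ^ 2 / (1 + β * insulationProfile c β t) + c ^ 2 * β * insulationProfile c β t
      ≤ t ^ 2 / (1 + β * s) + c ^ 2 * β * s := by
  have hd : 0 < 1 + β * s := by positivity
  by_cases h : c ≤ |t|
  · have hval : t ^ 2 / (1 + β * insulationProfile c β t) + c ^ 2 * β * insulationProfile c β t
        = 2 * c * |t| - c ^ 2 := by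
      have hden : 1 + β * (|t| / (c * β) - 1 / β) = |t| / c := by
        field_simp
        ring
      rw [insulationProfile_of_le h, hden, ← sq_abs t]
      field_simp
      ring
    have amgm : 2 * c * |t| ≤ t ^ 2 / (1 + β * s) + c ^ 2 * (1 + β * s) := by
      rw [div_add' _ _ _ hd.ne', le_div_iff₀ hd, ← sq_abs t]
      nlinarith [sq_nonneg (|t| - c * (1 + β * s))]
    linarith
  · rw [insulationProfile_of_lt (not_le.mp h), mul_zero, add_zero, div_one, mul_zero, add_zero]
    have htc : t ^ 2 ≤ c ^ 2 := by
      rw [← sq_abs t]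
      exact pow_le_pow_left₀ (abs_nonneg t) (not_le.mp h).le 2
    have hloss : t ^ 2 - t ^ 2 / (1 + β * s) ≤ c ^ 2 * β * s := by
      rw [sub_div' hd.ne', div_le_iff₀ hd]
      nlinarith [mul_nonneg (mul_nonneg hβ.le hs) (sq_nonneg t), mul_nonneg hβ.le hs,
        mul_le_mul_of_nonneg_right htc (mul_nonneg hβ.le hs)]
    linarith

end Pointwise

section Integral

variable {α : Type*} [MeasurableSpace α] {μ : Measure α} {v : α → ℝ} {c β : ℝ}

theorem MeasureTheory.MemLp.measure_le_abs_lt_top {p : ℝ≥0∞} (hv : MemLp v p μ) (hp₀ : p ≠ 0)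
    (hp : p ≠ ∞) (hc : 0 < c) : μ {σ | c ≤ |v σ|} < ∞ := by
  have hset : {σ | c ≤ |v σ|} = {σ | c.toNNReal ≤ ‖v σ‖₊} := by
    ext σ
    simp [← NNReal.coe_le_coe, hc.le]
  rw [hset]
  exact hv.meas_ge_lt_top hp₀ hp (by simpa using hc)

theorem integrable_sq_div_one_add_mul {g : α → ℝ} (hv : MemLp v 2 μ) (hβ : 0 ≤ β)
    (hg₀ : ∀ σ, 0 ≤ g σ) (hg : AEStronglyMeasurable g μ) :
    Integrable (fun σ => v σ ^ 2 / (1 + β * g σ)) μ := by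
  refine hv.integrable_sq.mono' ?_ (Eventually.of_forall fun σ => ?_)
  · exact (hv.aestronglyMeasurable.pow 2).div₀ (aestronglyMeasurable_const.add
      (aestronglyMeasurable_const.mul hg))
  · have hd : 1 ≤ 1 + β * g σ := le_add_of_nonneg_right (mul_nonneg hβ (hg₀ σ))
    rw [Real.norm_of_nonneg (by positivity)]
    exact div_le_self (sq_nonneg _) hd

theorem aestronglyMeasurable_insulationProfile (hv : AEStronglyMeasurable v μ) :
    AEStronglyMeasurable (fun σ => insulationProfile c β (v σ)) μ :=
  measurable_insulationProfile.comp_aemeasurable hv.aemeasurable |>.aestronglyMeasurable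

variable (hc : 0 < c) (hβ : 0 < β)
include hc hβ

theorem memLp_insulationProfile {p : ℝ≥0∞} (hv : MemLp v p μ) :
    MemLp (fun σ => insulationProfile c β (v σ)) p μ := by
  refine hv.of_le_mul (c := 1 / (c * β)) (aestronglyMeasurable_insulationProfile
    hv.aestronglyMeasurable) (Eventually.of_forall fun σ => ?_)
  rw [Real.norm_of_nonneg (insulationProfile_nonneg hc hβ _), Real.norm_eq_abs,
    one_div_mul_eq_div]
  exact insulationProfile_le_abs hc hβ _

theorem integrable_insulationProfile (hv : MemLp v 2 μ) :
    Integrable (fun σ => insulationProfile c β (v σ)) μ := by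
  refine (hv.integrable_sq.div_const (c ^ 2 * β)).mono'
    (aestronglyMeasurable_insulationProfile hv.aestronglyMeasurable)
    (Eventually.of_forall fun σ => ?_)
  rw [Real.norm_of_nonneg (insulationProfile_nonneg hc hβ _)]
  exact insulationProfile_le_sq hc hβ _

theorem integral_insulationProfile (hv : MemLp v 2 μ) :
    ∫ σ, insulationProfile c β (v σ) ∂μ
      = ((∫ σ in {σ | c ≤ |v σ|}, |v σ| ∂μ) - c * μ.real {σ | c ≤ |v σ|}) / (c * β) := by
  set S := {σ | c ≤ |v σ|}
  have hS : NullMeasurableSet S μ :=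
    hv.aestronglyMeasurable.aemeasurable.abs.nullMeasurable measurableSet_Ici
  have hSfin : μ S ≠ ∞ := (hv.measure_le_abs_lt_top two_ne_zero ENNReal.ofNat_ne_top hc).ne
  have : IsFiniteMeasure (μ.restrict S) := isFiniteMeasure_restrict.mpr hSfin
  have habs : IntegrableOn (fun σ => |v σ|) S μ := ((hv.restrict S).integrable one_le_two).abs
  have hind :
      (fun σ => insulationProfile c β (v σ)) = S.indicator fun σ => (|v σ| - c) / (c * β) :=
    funext fun σ => insulationProfile_eq_indicator hc hβ (v σ)
  rw [hind, integral_indicator₀ hS, integral_div, integral_sub habs (integrableOn_const hSfin),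
    setIntegral_const, smul_eq_mul, mul_comm]

theorem integral_sq_div_one_add_insulationProfile_le {g : α → ℝ} (hv : MemLp v 2 μ)
    (hg₀ : ∀ σ, 0 ≤ g σ) (hg : Integrable g μ)
    (hmass : ∫ σ, g σ ∂μ = ∫ σ, insulationProfile c β (v σ) ∂μ) :
    ∫ σ, v σ ^ 2 / (1 + β * insulationProfile c β (v σ)) ∂μ
      ≤ ∫ σ, v σ ^ 2 / (1 + β * g σ) ∂μ := by
  have hh := integrable_insulationProfile hc hβ hv
  have hq := integrable_sq_div_one_add_mul hv hβ.le (insulationProfile_nonneg hc hβ <| v ·)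
    hh.aestronglyMeasurable
  have hqg := integrable_sq_div_one_add_mul hv hβ.le hg₀ hg.aestronglyMeasurable
  have key := integral_mono (hq.add (hh.const_mul (c ^ 2 * β)))
    (hqg.add (hg.const_mul (c ^ 2 * β)))
    fun σ => sq_div_one_add_insulationProfile_add_le hc hβ (v σ) (hg₀ σ)
  rw [integral_add' hq (hh.const_mul _), integral_add' hqg (hg.const_mul _), integral_const_mul,
    integral_const_mul, hmass] at key
  linarith

end Integral

theorem optimal_profile_general {N : ℕ} (Ω : Set (Euc N))
    (β m : ℝ) (hβ : 0 < β)
    (v : Euc N → ℝ) (hv : MemLp v 2 (sm N Ω)) (c : ℝ) (hc : 0 < c)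
    (hceq : c * ((sm N Ω {σ | c ≤ |v σ|}).toReal + β * m)
      = ∫ σ in {σ | c ≤ |v σ|}, |v σ| ∂(sm N Ω))
    (hv' : Euc N → ℝ)
    (hdef : hv' = fun σ => if c ≤ |v σ| then |v σ| / (c * β) - 1 / β else 0) :
    (∀ σ, 0 ≤ hv' σ) ∧ MemLp hv' 2 (sm N Ω) ∧ (∫ σ, hv' σ ∂(sm N Ω)) = m ∧
      ∀ g : Euc N → ℝ, (∀ σ, 0 ≤ g σ) → Integrable g (sm N Ω) →
        (∫ σ, g σ ∂(sm N Ω)) = m →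
        (∫ σ, v σ ^ 2 / (1 + β * hv' σ) ∂(sm N Ω)) ≤
          ∫ σ, v σ ^ 2 / (1 + β * g σ) ∂(sm N Ω) := by
  change hv' = fun σ => insulationProfile c β (v σ) at hdef
  subst hdef
  have hmass : ∫ σ, insulationProfile c β (v σ) ∂(sm N Ω) = m := by
    rw [integral_insulationProfile hc hβ hv, measureReal_def, ← hceq]
    field_simp
    ring
  exact ⟨fun σ => insulationProfile_nonneg hc hβ (v σ), memLp_insulationProfile hc hβ hv, hmass,
    fun g hg₀ hg hgm => integral_sq_div_one_add_insulationProfile_le hc hβ hv hg₀ hg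
      (hgm.trans hmass.symm)⟩

/-- the explicit profile `h_v` is admissible and minimizes the boundary energy. -/
theorem optimal_profile {N : ℕ} (Ω : Set (Euc N)) (hΩo : IsOpen Ω)
    (hΩb : Bornology.IsBounded Ω) (β m : ℝ) (hβ : 0 < β) (hm : 0 < m)
    (v : Euc N → ℝ) (hv : MemLp v 2 (sm N Ω)) (c : ℝ) (hc : 0 < c)
    (hceq : c * ((sm N Ω {σ | c ≤ |v σ|}).toReal + β * m)
      = ∫ σ in {σ | c ≤ |v σ|}, |v σ| ∂(sm N Ω))
    (hv' : Euc N → ℝ)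
    (hdef : hv' = fun σ => if c ≤ |v σ| then |v σ| / (c * β) - 1 / β else 0) :
    (∀ σ, 0 ≤ hv' σ) ∧ MemLp hv' 2 (sm N Ω) ∧ (∫ σ, hv' σ ∂(sm N Ω)) = m ∧
      ∀ g : Euc N → ℝ, (∀ σ, 0 ≤ g σ) → Integrable g (sm N Ω) →
        (∫ σ, g σ ∂(sm N Ω)) = m →
        (∫ σ, v σ ^ 2 / (1 + β * hv' σ) ∂(sm N Ω)) ≤
          ∫ σ, v σ ^ 2 / (1 + β * g σ) ∂(sm N Ω) :=
  optimal_profile_general Ω β m hβ v hv c hc hceq hv' hdef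
end
end
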